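/- arXiv:2109.13041 — 3 statements merged into one kernel-verified Lean document; each statement's English description precedes it below -/
import Mathlib

section
/- Let m, ρ, R, q > 0 and set f_cr = |q|·R·√(ρm/(2π)). If 0 < f < f_cr, then U'(s) > 0 for all s > R, where U(s) = f²/(2ms²) + (ρq²/(4π))·ln(1 − R²/s²); i.e., U is strictly monotonically increasing on (R, ∞). -/
open Real Set

/-- In the paper's notation `a = f² / (2m)` and `b = ρq² / (4π)`. -/
noncomputable def effectivePotential (a b R s : ℝ) : ℝ :=
  a / s ^ 2 + b * log (1 - R ^ 2 / s ^ 2)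

section Derivative

variable {a b R s : ℝ}

theorem hasDerivAt_div_sq (a : ℝ) (hs : s ≠ 0) :
    HasDerivAt (fun s : ℝ => a / s ^ 2) (-2 * a / s ^ 3) s := by
  refine ((hasDerivAt_const s a).div (hasDerivAt_pow 2 s) (pow_ne_zero 2 hs)).congr_deriv ?_
  field_simp
  ring

theorem hasDerivAt_log_one_sub_sq_div_sq (hs : s ≠ 0) (hsR : s ^ 2 ≠ R ^ 2) :
    HasDerivAt (fun s : ℝ => log (1 - R ^ 2 / s ^ 2)) (2 * R ^ 2 / (s * (s ^ 2 - R ^ 2))) s := by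
  have hsR' : s ^ 2 - R ^ 2 ≠ 0 := sub_ne_zero.mpr hsR
  have hlog_arg : 1 - R ^ 2 / s ^ 2 ≠ 0 := by
    rwa [one_sub_div (pow_ne_zero 2 hs), div_ne_zero_iff, and_iff_left (pow_ne_zero 2 hs)]
  convert ((hasDerivAt_div_sq (R ^ 2) hs).const_sub 1).log hlog_arg using 1
  field_simp

theorem hasDerivAt_effectivePotential (hs : s ≠ 0) (hsR : s ^ 2 ≠ R ^ 2) :
    HasDerivAt (effectivePotential a b R)
      (-2 * a / s ^ 3 + b * (2 * R ^ 2 / (s * (s ^ 2 - R ^ 2)))) s :=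
  (hasDerivAt_div_sq a hs).add ((hasDerivAt_log_one_sub_sq_div_sq hs hsR).const_mul b)

/-- Since `s (s² - R²) < s³`, the attractive logarithmic term dominates the centrifugal
term as soon as it does so at infinity, i.e. as soon as `a < b R²`. -/
theorem deriv_effectivePotential_pos (ha : 0 ≤ a) (hab : a < b * R ^ 2) (hR : 0 < R)
    (hs : R < s) : 0 < deriv (effectivePotential a b R) s := by
  have hs₀ : 0 < s := hR.trans hs
  have hsR : 0 < s ^ 2 - R ^ 2 := by nlinarith
  rw [(hasDerivAt_effectivePotential hs₀.ne' (by linarith)).deriv, mul_div_assoc', neg_mul,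
    neg_div, neg_add_eq_sub, sub_pos]
  calc 2 * a / s ^ 3 < 2 * (b * R ^ 2) / s ^ 3 := by gcongr
    _ ≤ 2 * (b * R ^ 2) / (s * (s ^ 2 - R ^ 2)) :=
      div_le_div_of_nonneg_left (by linarith) (by positivity) (by nlinarith)
    _ = b * (2 * R ^ 2) / (s * (s ^ 2 - R ^ 2)) := by ring

theorem strictMonoOn_effectivePotential (ha : 0 ≤ a) (hab : a < b * R ^ 2) (hR : 0 < R) :
    StrictMonoOn (effectivePotential a b R) (Ioi R) := by
  have hpos : ∀ s ∈ Ioi R, 0 < deriv (effectivePotential a b R) s :=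
    fun s hs => deriv_effectivePotential_pos ha hab hR hs
  refine strictMonoOn_of_deriv_pos (convex_Ioi R) (fun s hs => ?_) (by rwa [interior_Ioi])
  exact (differentiableAt_of_deriv_ne_zero (hpos s hs).ne').continuousAt.continuousWithinAt

end Derivative

theorem sq_lt_mul_of_lt_mul_sqrt {f c x : ℝ} (hf : 0 ≤ f) (hx : 0 ≤ x) (h : f < c * √x) :
    f ^ 2 < c ^ 2 * x := by
  simpa only [mul_pow, sq_sqrt hx] using pow_lt_pow_left₀ h hf two_ne_zero

theorem effective_potential_strict_mono_subcritical_general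
    (m ρ R q f : ℝ) (hm : 0 < m) (hρ : 0 < ρ) (hR : 0 < R)
    (hf : 0 < f) (hfcr : f < |q| * R * Real.sqrt (ρ * m / (2*π))) :
    (∀ s ∈ Set.Ioi R,
      0 < deriv (fun s : ℝ => f^2 / (2*m*s^2) + (ρ*q^2/(4*π)) * Real.log (1 - R^2/s^2)) s) ∧
    StrictMonoOn (fun s : ℝ => f^2 / (2*m*s^2) + (ρ*q^2/(4*π)) * Real.log (1 - R^2/s^2))
      (Set.Ioi R) := by
  have hU : (fun s : ℝ => f^2 / (2*m*s^2) + (ρ*q^2/(4*π)) * Real.log (1 - R^2/s^2)) =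
      effectivePotential (f ^ 2 / (2 * m)) (ρ * q ^ 2 / (4 * π)) R := by
    funext s
    rw [effectivePotential, div_mul_eq_div_div]
  have hsub : f ^ 2 / (2 * m) < ρ * q ^ 2 / (4 * π) * R ^ 2 := by
    have hfcr_sq := sq_lt_mul_of_lt_mul_sqrt hf.le (by positivity) hfcr
    rw [mul_pow, sq_abs] at hfcr_sq
    calc f ^ 2 / (2 * m) < q ^ 2 * R ^ 2 * (ρ * m / (2 * π)) / (2 * m) := by gcongr
      _ = ρ * q ^ 2 / (4 * π) * R ^ 2 := by field_simp; ring
  rw [hU]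
  exact ⟨fun s hs => deriv_effectivePotential_pos (by positivity) hsub hR hs,
    strictMonoOn_effectivePotential (by positivity) hsub hR⟩

theorem effective_potential_strict_mono_subcritical
    (m ρ R q f : ℝ) (hm : 0 < m) (hρ : 0 < ρ) (hR : 0 < R) (hq : 0 < q)
    (hf : 0 < f) (hfcr : f < |q| * R * Real.sqrt (ρ * m / (2*π))) :
    (∀ s ∈ Set.Ioi R,
      0 < deriv (fun s : ℝ => f^2 / (2*m*s^2) + (ρ*q^2/(4*π)) * Real.log (1 - R^2/s^2)) s) ∧
    StrictMonoOn (fun s : ℝ => f^2 / (2*m*s^2) + (ρ*q^2/(4*π)) * Real.log (1 - R^2/s^2))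
      (Set.Ioi R) :=
  effective_potential_strict_mono_subcritical_general m ρ R q f hm hρ hR hf hfcr
end

section
/- For the Hamiltonian H(X, Y, Θ, Px, Py, Pθ) given below, the quantity K = Pθ + Py·X − Px·Y is a first integral of the canonical Hamiltonian equations: its Poisson bracket with H vanishes, i.e., {K, H} = 0. -/
/-!
K generates the simultaneous rotation of the (X, Y)-plane, of (Px, Py) and of the angle Θ, and H
is invariant under it: the potential depends only on X² + Y², the vector potential A is
rotation-equivariant, and Q(Θ) = R(Θ) Q(0) R(Θ)ᵀ for the rotation R(Θ) about the third axis, so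
that Q(Θ)⁻¹ = R(Θ) Q(0)⁻¹ R(Θ)ᵀ. Hence the Θ-derivative of ½⟨𝒫, Q⁻¹𝒫⟩ is ⟨(𝒫_y, -𝒫_x, 0), Q⁻¹𝒫⟩,
which cancels the contribution of the X, Y, Px, Py terms of {K, H}.
-/

open Real Matrix

section Calculus

variable {𝕜 : Type*} [NontriviallyNormedField 𝕜] {n : Type*} [Fintype n]

theorem HasDerivAt.dotProduct {u w : 𝕜 → n → 𝕜} {u' w' : n → 𝕜} {t : 𝕜}
    (hu : HasDerivAt u u' t) (hw : HasDerivAt w w' t) :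
    HasDerivAt (fun s => u s ⬝ᵥ w s) (u' ⬝ᵥ w t + u t ⬝ᵥ w') t := by
  rw [hasDerivAt_pi] at hu hw
  unfold _root_.dotProduct
  rw [← Finset.sum_add_distrib]
  exact HasDerivAt.fun_sum fun i _ => (hu i).mul (hw i)

theorem HasDerivAt.const_mulVec (M : Matrix n n 𝕜) {u : 𝕜 → n → 𝕜} {u' : n → 𝕜} {t : 𝕜}
    (hu : HasDerivAt u u' t) : HasDerivAt (fun s => M *ᵥ u s) (M *ᵥ u') t :=
  hasDerivAt_pi.2 fun i =>
    (hasDerivAt_const t (M i)).dotProduct hu |>.congr_deriv (by rw [zero_dotProduct, zero_add]; rfl)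

theorem HasDerivAt.dotProduct_mulVec_self {M : Matrix n n 𝕜} (hM : M.IsSymm)
    {u : 𝕜 → n → 𝕜} {u' : n → 𝕜} {t : 𝕜} (hu : HasDerivAt u u' t) :
    HasDerivAt (fun s => u s ⬝ᵥ (M *ᵥ u s)) (2 * (u' ⬝ᵥ (M *ᵥ u t))) t := by
  convert hu.dotProduct (hu.const_mulVec M) using 1
  rw [dotProduct_mulVec, ← mulVec_transpose, hM.eq, dotProduct_comm]
  ring

theorem hasDerivAt_vec3 {f₀ f₁ f₂ : 𝕜 → 𝕜} {a b c t : 𝕜} (h₀ : HasDerivAt f₀ a t)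
    (h₁ : HasDerivAt f₁ b t) (h₂ : HasDerivAt f₂ c t) :
    HasDerivAt (fun s => ![f₀ s, f₁ s, f₂ s]) ![a, b, c] t :=
  hasDerivAt_pi.2 fun i => by fin_cases i <;> assumption

end Calculus

theorem dotProduct_conj_mulVec {α n : Type*} [CommSemiring α] [Fintype n] (R N : Matrix n n α)
    (a b : n → α) : a ⬝ᵥ ((R * N * Rᵀ) *ᵥ b) = (Rᵀ *ᵥ a) ⬝ᵥ (N *ᵥ (Rᵀ *ᵥ b)) := by
  rw [← mulVec_mulVec, ← mulVec_mulVec, dotProduct_mulVec, ← mulVec_transpose R a]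

noncomputable def rotZ (θ : ℝ) : Matrix (Fin 3) (Fin 3) ℝ :=
  !![cos θ, -sin θ, 0; sin θ, cos θ, 0; 0, 0, 1]

theorem rotZ_transpose (θ : ℝ) :
    (rotZ θ)ᵀ = !![cos θ, sin θ, 0; -sin θ, cos θ, 0; 0, 0, 1] := by
  ext i j
  fin_cases i <;> fin_cases j <;> rfl

theorem rotZ_mul_transpose_self (θ : ℝ) : rotZ θ * (rotZ θ)ᵀ = 1 := by
  have := sin_sq_add_cos_sq θ
  rw [rotZ_transpose, rotZ, mul_fin_three, one_fin_three]
  simp only [EmbeddingLike.apply_eq_iff_eq, vecCons_inj, and_true]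
  grind

theorem inv_rotZ_conj (N : Matrix (Fin 3) (Fin 3) ℝ) (θ : ℝ) :
    (rotZ θ * N * (rotZ θ)ᵀ)⁻¹ = rotZ θ * N⁻¹ * (rotZ θ)ᵀ := by
  have h := rotZ_mul_transpose_self θ
  rw [Matrix.mul_inv_rev, Matrix.mul_inv_rev, inv_eq_left_inv h,
    inv_eq_left_inv (mul_eq_one_comm.1 h), Matrix.mul_assoc]

theorem rotZ_conj_eq (a b c θ : ℝ) :
    rotZ θ * !![a, 0, 0; 0, a, b; 0, b, c] * (rotZ θ)ᵀ
      = !![a, 0, -(b * sin θ); 0, a, b * cos θ; -(b * sin θ), b * cos θ, c] := by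
  have := sin_sq_add_cos_sq θ
  rw [rotZ_transpose, rotZ, mul_fin_three, mul_fin_three]
  simp only [EmbeddingLike.apply_eq_iff_eq, vecCons_inj, and_true]
  grind

theorem rotZ_transpose_mulVec (θ : ℝ) (p : Fin 3 → ℝ) :
    (rotZ θ)ᵀ *ᵥ p = ![cos θ * p 0 + sin θ * p 1, -sin θ * p 0 + cos θ * p 1, p 2] := by
  ext i
  fin_cases i <;> simp [rotZ, mulVec, dotProduct, Fin.sum_univ_three]

theorem hasDerivAt_rotZ_transpose_mulVec (p : Fin 3 → ℝ) (θ : ℝ) :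
    HasDerivAt (fun θ => (rotZ θ)ᵀ *ᵥ p) ((rotZ θ)ᵀ *ᵥ ![p 1, -p 0, 0]) θ := by
  simp only [rotZ_transpose_mulVec]
  refine (hasDerivAt_vec3
    (((hasDerivAt_cos θ).mul_const _).add ((hasDerivAt_sin θ).mul_const _))
    (((hasDerivAt_sin θ).neg.mul_const _).add ((hasDerivAt_cos θ).mul_const _))
    (hasDerivAt_const _ _)).congr_deriv ?_
  simp only [cons_val_zero, cons_val_one, cons_val_two, Fin.isValue]
  congr 1
  · ring
  congr 1
  ring

theorem hasDerivAt_dotProduct_rotZ_conj_mulVec {N : Matrix (Fin 3) (Fin 3) ℝ} (hN : N.IsSymm)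
    (p : Fin 3 → ℝ) (θ : ℝ) :
    HasDerivAt (fun θ => p ⬝ᵥ ((rotZ θ * N * (rotZ θ)ᵀ) *ᵥ p))
      (2 * (![p 1, -p 0, 0] ⬝ᵥ ((rotZ θ * N * (rotZ θ)ᵀ) *ᵥ p))) θ := by
  simp only [dotProduct_conj_mulVec]
  exact (hasDerivAt_rotZ_transpose_mulVec p θ).dotProduct_mulVec_self hN

noncomputable def kineticMomentum (k x y px py pθ : ℝ) : Fin 3 → ℝ :=
  ![px + k * x / (x ^ 2 + y ^ 2), py + k * y / (x ^ 2 + y ^ 2), pθ]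

noncomputable def magneticHamiltonian (k : ℝ) (V : ℝ → ℝ) (M : ℝ → Matrix (Fin 3) (Fin 3) ℝ)
    (x y θ px py pθ : ℝ) : ℝ :=
  1 / 2 * (kineticMomentum k x y px py pθ ⬝ᵥ (M θ *ᵥ kineticMomentum k x y px py pθ))
    - V (x ^ 2 + y ^ 2)

/-- `{K, H}` for `K = Pθ + Py X - Px Y`. -/
noncomputable def angularMomentumBracket (H : ℝ → ℝ → ℝ → ℝ → ℝ → ℝ → ℝ)
    (X Y Θ Px Py Pθ : ℝ) : ℝ :=
  Py * deriv (fun px => H X Y Θ px Py Pθ) Px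
    - Px * deriv (fun py => H X Y Θ Px py Pθ) Py
    - (-Y * deriv (fun x => H x Y Θ Px Py Pθ) X
       + X * deriv (fun y => H X y Θ Px Py Pθ) Y
       + deriv (fun θ => H X Y θ Px Py Pθ) Θ)

theorem hasDerivAt_kineticMomentum_px (k x y py pθ px : ℝ) :
    HasDerivAt (fun t => kineticMomentum k x y t py pθ) ![1, 0, 0] px :=
  hasDerivAt_vec3 ((hasDerivAt_id px).add_const _) (hasDerivAt_const _ _) (hasDerivAt_const _ _)

theorem hasDerivAt_kineticMomentum_py (k x y px pθ py : ℝ) :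
    HasDerivAt (fun t => kineticMomentum k x y px t pθ) ![0, 1, 0] py :=
  hasDerivAt_vec3 (hasDerivAt_const _ _) ((hasDerivAt_id py).add_const _) (hasDerivAt_const _ _)

theorem hasDerivAt_kineticMomentum_x (k px py pθ : ℝ) {x y : ℝ} (hr : x ^ 2 + y ^ 2 ≠ 0) :
    HasDerivAt (fun t => kineticMomentum k t y px py pθ)
      ![k * (y ^ 2 - x ^ 2) / (x ^ 2 + y ^ 2) ^ 2, -(2 * k * x * y) / (x ^ 2 + y ^ 2) ^ 2, 0] x := by
  have hr2 : HasDerivAt (fun t => t ^ 2 + y ^ 2) (2 * x) x := by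
    simpa using (hasDerivAt_pow 2 x).add_const (y ^ 2)
  refine hasDerivAt_vec3 ?_ ?_ (hasDerivAt_const _ _)
  · exact (((hasDerivAt_id' x).const_mul k).div hr2 hr).const_add px |>.congr_deriv (by ring)
  · exact ((hasDerivAt_const x (k * y)).div hr2 hr).const_add py |>.congr_deriv (by ring)

theorem hasDerivAt_kineticMomentum_y (k px py pθ : ℝ) {x y : ℝ} (hr : x ^ 2 + y ^ 2 ≠ 0) :
    HasDerivAt (fun t => kineticMomentum k x t px py pθ)
      ![-(2 * k * x * y) / (x ^ 2 + y ^ 2) ^ 2, k * (x ^ 2 - y ^ 2) / (x ^ 2 + y ^ 2) ^ 2, 0] y := by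
  have hr2 : HasDerivAt (fun t => x ^ 2 + t ^ 2) (2 * y) y := by
    simpa using (hasDerivAt_pow 2 y).const_add (x ^ 2)
  refine hasDerivAt_vec3 ?_ ?_ (hasDerivAt_const _ _)
  · exact ((hasDerivAt_const y (k * x)).div hr2 hr).const_add px |>.congr_deriv (by ring)
  · exact (((hasDerivAt_id' y).const_mul k).div hr2 hr).const_add py |>.congr_deriv (by ring)

theorem vectorPotential_rotation_equivariant (k x y : ℝ) (hr : x ^ 2 + y ^ 2 ≠ 0) :
    y * (k * (y ^ 2 - x ^ 2) / (x ^ 2 + y ^ 2) ^ 2) - x * (-(2 * k * x * y) / (x ^ 2 + y ^ 2) ^ 2)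
        = k * y / (x ^ 2 + y ^ 2) ∧
      y * (-(2 * k * x * y) / (x ^ 2 + y ^ 2) ^ 2) - x * (k * (x ^ 2 - y ^ 2) / (x ^ 2 + y ^ 2) ^ 2)
        = -(k * x / (x ^ 2 + y ^ 2)) := by
  constructor <;> field_simp <;> ring

theorem angularMomentumBracket_magneticHamiltonian_eq_zero (k : ℝ) {V : ℝ → ℝ}
    {N : Matrix (Fin 3) (Fin 3) ℝ} (hN : N.IsSymm) {x y : ℝ} (θ px py pθ : ℝ)
    (hr : x ^ 2 + y ^ 2 ≠ 0) (hV : DifferentiableAt ℝ V (x ^ 2 + y ^ 2)) :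
    angularMomentumBracket (magneticHamiltonian k V fun θ => rotZ θ * N * (rotZ θ)ᵀ)
      x y θ px py pθ = 0 := by
  set M := rotZ θ * N * (rotZ θ)ᵀ
  set P := kineticMomentum k x y px py pθ
  have hM : M.IsSymm := by
    simp only [M, IsSymm, transpose_mul, transpose_transpose, hN.eq, Matrix.mul_assoc]
  have hVx : HasDerivAt (fun t => V (t ^ 2 + y ^ 2)) (deriv V (x ^ 2 + y ^ 2) * (2 * x)) x :=
    hV.hasDerivAt.comp x (by simpa using (hasDerivAt_pow 2 x).add_const (y ^ 2))
  have hVy : HasDerivAt (fun t => V (x ^ 2 + t ^ 2)) (deriv V (x ^ 2 + y ^ 2) * (2 * y)) y :=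
    hV.hasDerivAt.comp y (by simpa using (hasDerivAt_pow 2 y).const_add (x ^ 2))
  have hpx := ((hasDerivAt_kineticMomentum_px k x y py pθ px).dotProduct_mulVec_self hM).const_mul
    (1 / 2) |>.sub_const (V (x ^ 2 + y ^ 2))
  have hpy := ((hasDerivAt_kineticMomentum_py k x y px pθ py).dotProduct_mulVec_self hM).const_mul
    (1 / 2) |>.sub_const (V (x ^ 2 + y ^ 2))
  have hx := ((hasDerivAt_kineticMomentum_x k px py pθ hr).dotProduct_mulVec_self hM).const_mul
    (1 / 2) |>.fun_sub hVx
  have hy := ((hasDerivAt_kineticMomentum_y k px py pθ hr).dotProduct_mulVec_self hM).const_mul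
    (1 / 2) |>.fun_sub hVy
  have hθ := (hasDerivAt_dotProduct_rotZ_conj_mulVec hN P θ).const_mul (1 / 2)
    |>.sub_const (V (x ^ 2 + y ^ 2))
  obtain ⟨h₀, h₁⟩ := vectorPotential_rotation_equivariant k x y hr
  unfold angularMomentumBracket magneticHamiltonian
  beta_reduce
  rw [hpx.deriv, hpy.deriv, hx.deriv, hy.deriv, hθ.deriv]
  set v := M *ᵥ P
  simp only [dotProduct, Fin.sum_univ_three, P, kineticMomentum, cons_val_zero, cons_val_one,
    cons_val, Fin.isValue]
  linear_combination v 0 * h₀ + v 1 * h₁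

theorem angular_momentum_first_integral_general
    (mc Ic R ρ q : ℝ) (d : ℝ)
    (Q : ℝ → Matrix (Fin 3) (Fin 3) ℝ)
    (hQ : ∀ Θ, Q Θ = !![mc + ρ*π*R^2, 0, -mc*d*Real.sin Θ;
                        0, mc + ρ*π*R^2, mc*d*Real.cos Θ;
                        -mc*d*Real.sin Θ, mc*d*Real.cos Θ, Ic + mc*d^2])
    (H : ℝ → ℝ → ℝ → ℝ → ℝ → ℝ → ℝ)
    (hH : ∀ X Y Θ Px Py Pθ,
      H X Y Θ Px Py Pθ =
        (1/2) * (![Px + ρ*q*R^2*X/(X^2+Y^2), Py + ρ*q*R^2*Y/(X^2+Y^2), Pθ] ⬝ᵥ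
          ((Q Θ)⁻¹ *ᵥ ![Px + ρ*q*R^2*X/(X^2+Y^2), Py + ρ*q*R^2*Y/(X^2+Y^2), Pθ]))
        - (ρ*q^2/(4*π)) * (Real.log (X^2+Y^2) - Real.log (X^2+Y^2 - R^2))) :
    ∀ X Y Θ Px Py Pθ : ℝ, X^2 + Y^2 > R^2 →
      Py * deriv (fun px => H X Y Θ px Py Pθ) Px
      - Px * deriv (fun py => H X Y Θ Px py Pθ) Py
      - (-Y * deriv (fun x => H x Y Θ Px Py Pθ) X
         + X * deriv (fun y => H X y Θ Px Py Pθ) Y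
         + deriv (fun θ => H X Y θ Px Py Pθ) Θ) = 0 := by
  have hQ_rot : ∀ Θ, Q Θ = rotZ Θ * Q 0 * (rotZ Θ)ᵀ := fun Θ => by
    rw [hQ Θ, hQ 0]
    simp only [sin_zero, cos_zero, mul_zero, mul_one, neg_mul, rotZ_conj_eq]
  have hQ_symm : (Q 0).IsSymm := IsSymm.ext fun i j => by
    rw [hQ]; fin_cases i <;> fin_cases j <;> rfl
  obtain rfl : H = magneticHamiltonian (ρ * q * R ^ 2)
      (fun s => ρ * q ^ 2 / (4 * π) * (log s - log (s - R ^ 2)))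
      (fun Θ => rotZ Θ * (Q 0)⁻¹ * (rotZ Θ)ᵀ) := by
    funext X Y Θ Px Py Pθ
    rw [hH, hQ_rot Θ, inv_rotZ_conj]
    rfl
  intro X Y Θ Px Py Pθ hr
  have hr₀ : X ^ 2 + Y ^ 2 ≠ 0 := ((sq_nonneg R).trans_lt hr).ne'
  have hsub : X ^ 2 + Y ^ 2 - R ^ 2 ≠ 0 := sub_ne_zero.2 hr.ne'
  have hV : DifferentiableAt ℝ (fun s => ρ * q ^ 2 / (4 * π) * (log s - log (s - R ^ 2)))
      (X ^ 2 + Y ^ 2) := by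
    fun_prop (disch := assumption)
  exact angularMomentumBracket_magneticHamiltonian_eq_zero _ hQ_symm.inv Θ Px Py Pθ hr₀ hV

theorem angular_momentum_first_integral
    (mc Ic R ρ q : ℝ) (d : ℝ)
    (hmc : 0 < mc) (hIc : 0 < Ic) (hR : 0 < R) (hρ : 0 < ρ) (hq : 0 < q) (hd : 0 ≤ d)
    (Q : ℝ → Matrix (Fin 3) (Fin 3) ℝ)
    (hQ : ∀ Θ, Q Θ = !![mc + ρ*π*R^2, 0, -mc*d*Real.sin Θ;
                        0, mc + ρ*π*R^2, mc*d*Real.cos Θ;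
                        -mc*d*Real.sin Θ, mc*d*Real.cos Θ, Ic + mc*d^2])
    (hdet : ∀ Θ, (Q Θ).det ≠ 0)
    (H : ℝ → ℝ → ℝ → ℝ → ℝ → ℝ → ℝ)
    (hH : ∀ X Y Θ Px Py Pθ,
      H X Y Θ Px Py Pθ =
        (1/2) * (![Px + ρ*q*R^2*X/(X^2+Y^2), Py + ρ*q*R^2*Y/(X^2+Y^2), Pθ] ⬝ᵥ
          ((Q Θ)⁻¹ *ᵥ ![Px + ρ*q*R^2*X/(X^2+Y^2), Py + ρ*q*R^2*Y/(X^2+Y^2), Pθ]))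
        - (ρ*q^2/(4*π)) * (Real.log (X^2+Y^2) - Real.log (X^2+Y^2 - R^2))) :
    ∀ X Y Θ Px Py Pθ : ℝ, X^2 + Y^2 > R^2 →
      Py * deriv (fun px => H X Y Θ px Py Pθ) Px
      - Px * deriv (fun py => H X Y Θ Px py Pθ) Py
      - (-Y * deriv (fun x => H x Y Θ Px Py Pθ) X
         + X * deriv (fun y => H X y Θ Px Py Pθ) Y
         + deriv (fun θ => H X Y θ Px Py Pθ) Θ) = 0 :=
  angular_momentum_first_integral_general mc Ic R ρ q d Q hQ H hH
end

section
/- All critical points of the effective potential U_e(x, y) = k²/(2(m(x²+y²) + 2m_c d x + I_c + m_c d²)) + (ρq²/(4π))·ln(1 − R²/(x²+y²)), defined on {(x,y) : x²+y² > R²}, satisfy y = 0, provided d > 0 and k ≠ 0. -/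
/-!
Write `S = x² + y²` and `Q = m S + b x + c`, so that the potential is `φ Q + ψ S`. Then
`∂_y U = 2y (m φ'(Q) + ψ'(S))` and `∂_x U = 2x (m φ'(Q) + ψ'(S)) + b φ'(Q)`. Off the axis the
first equation kills the bracket, and the second then reads `b φ'(Q) = 0`, which is impossible
when `b = 2 m_c d ≠ 0` and `φ'(Q) = -k²/(2Q²) ≠ 0`.
-/

open Real

def shiftedRadialPotential (φ ψ : ℝ → ℝ) (m b c x y : ℝ) : ℝ :=
  φ (m * (x ^ 2 + y ^ 2) + b * x + c) + ψ (x ^ 2 + y ^ 2)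

namespace shiftedRadialPotential

variable {φ ψ : ℝ → ℝ} {m b c x y φ' ψ' : ℝ}

theorem hasDerivAt_fst (hφ : HasDerivAt φ φ' (m * (x ^ 2 + y ^ 2) + b * x + c))
    (hψ : HasDerivAt ψ ψ' (x ^ 2 + y ^ 2)) :
    HasDerivAt (fun x' => shiftedRadialPotential φ ψ m b c x' y)
      (2 * x * (m * φ' + ψ') + b * φ') x := by
  have hS : HasDerivAt (fun x' : ℝ => x' ^ 2 + y ^ 2) (2 * x) x := by
    simpa using (hasDerivAt_pow 2 x).add_const (y ^ 2)
  have hQ : HasDerivAt (fun x' : ℝ => m * (x' ^ 2 + y ^ 2) + b * x' + c) (m * (2 * x) + b) x := by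
    simpa using ((hS.const_mul m).add ((hasDerivAt_id x).const_mul b)).add_const c
  exact ((hφ.comp x hQ).add (hψ.comp x hS)).congr_deriv (by ring)

theorem hasDerivAt_snd (hφ : HasDerivAt φ φ' (m * (x ^ 2 + y ^ 2) + b * x + c))
    (hψ : HasDerivAt ψ ψ' (x ^ 2 + y ^ 2)) :
    HasDerivAt (fun y' => shiftedRadialPotential φ ψ m b c x y') (2 * y * (m * φ' + ψ')) y := by
  have hS : HasDerivAt (fun y' : ℝ => x ^ 2 + y' ^ 2) (2 * y) y := by
    simpa using (hasDerivAt_pow 2 y).const_add (x ^ 2)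
  have hQ : HasDerivAt (fun y' : ℝ => m * (x ^ 2 + y' ^ 2) + b * x + c) (m * (2 * y)) y := by
    simpa using ((hS.const_mul m).add_const (b * x)).add_const c
  exact ((hφ.comp y hQ).add (hψ.comp y hS)).congr_deriv (by ring)

theorem snd_eq_zero_of_deriv_eq_zero (hφ : HasDerivAt φ φ' (m * (x ^ 2 + y ^ 2) + b * x + c))
    (hψ : DifferentiableAt ℝ ψ (x ^ 2 + y ^ 2)) (hb : b ≠ 0) (hφ' : φ' ≠ 0)
    (hdx : deriv (fun x' => shiftedRadialPotential φ ψ m b c x' y) x = 0)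
    (hdy : deriv (fun y' => shiftedRadialPotential φ ψ m b c x y') y = 0) : y = 0 := by
  rw [(hasDerivAt_fst hφ hψ.hasDerivAt).deriv] at hdx
  rw [(hasDerivAt_snd hφ hψ.hasDerivAt).deriv] at hdy
  by_contra hy
  have hbracket : m * φ' + deriv ψ (x ^ 2 + y ^ 2) = 0 := by
    simpa [hy] using hdy
  have hbφ' : b * φ' = 0 := by simpa [hbracket] using hdx
  exact mul_ne_zero hb hφ' hbφ'

end shiftedRadialPotential

theorem hasDerivAt_div_two_mul (a : ℝ) {t : ℝ} (ht : t ≠ 0) :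
    HasDerivAt (fun t => a / (2 * t)) (-a / (2 * t ^ 2)) t :=
  ((hasDerivAt_const t a).div ((hasDerivAt_id' t).const_mul 2) (by positivity)).congr_deriv
    (by field_simp; ring)

theorem critical_points_on_axis_general
    (mc Ic ρ R q d k : ℝ)
    (hmc : 0 < mc)
    (hd : 0 < d) (hk : k ≠ 0)
    (m : ℝ)
    (hpos : ∀ x y : ℝ, x^2 + y^2 > R^2 →
      0 < m*(x^2+y^2) + 2*mc*d*x + Ic + mc*d^2)
    (Ue : ℝ → ℝ → ℝ)
    (hUe : ∀ x y, Ue x y =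
      k^2 / (2*(m*(x^2+y^2) + 2*mc*d*x + Ic + mc*d^2))
        + (ρ*q^2/(4*π)) * Real.log (1 - R^2/(x^2+y^2))) :
    ∀ x y : ℝ, x^2 + y^2 > R^2 →
      deriv (fun x' => Ue x' y) x = 0 →
      deriv (fun y' => Ue x y') y = 0 →
      y = 0 := by
  intro x y hxy hdx hdy
  rw [show Ue = shiftedRadialPotential (fun t => k ^ 2 / (2 * t))
      (fun s => ρ * q ^ 2 / (4 * π) * Real.log (1 - R ^ 2 / s)) m (2 * mc * d) (Ic + mc * d ^ 2)
    by ext x y; simp only [hUe, shiftedRadialPotential, add_assoc]] at hdx hdy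
  have hS : 0 < x ^ 2 + y ^ 2 := (sq_nonneg R).trans_lt hxy
  have hQ : m * (x ^ 2 + y ^ 2) + 2 * mc * d * x + (Ic + mc * d ^ 2) ≠ 0 := by
    rw [← add_assoc]; exact (hpos x y hxy).ne'
  have hlog : 1 - R ^ 2 / (x ^ 2 + y ^ 2) ≠ 0 := (sub_pos.mpr ((div_lt_one hS).mpr hxy)).ne'
  have hψ : DifferentiableAt ℝ (fun s => ρ * q ^ 2 / (4 * π) * Real.log (1 - R ^ 2 / s))
      (x ^ 2 + y ^ 2) := by
    have hS₀ : x ^ 2 + y ^ 2 ≠ 0 := hS.ne'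
    fun_prop (disch := assumption)
  exact shiftedRadialPotential.snd_eq_zero_of_deriv_eq_zero (hasDerivAt_div_two_mul (k ^ 2) hQ) hψ
    (by positivity) (div_ne_zero (neg_ne_zero.mpr (pow_ne_zero 2 hk)) (by positivity)) hdx hdy

theorem critical_points_on_axis
    (mc Ic ρ R q d k : ℝ)
    (hmc : 0 < mc) (hIc : 0 < Ic) (hρ : 0 < ρ) (hR : 0 < R) (hq : 0 < q)
    (hd : 0 < d) (hk : k ≠ 0)
    (m : ℝ) (hm : m = mc + ρ*π*R^2)
    (hpos : ∀ x y : ℝ, x^2 + y^2 > R^2 →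
      0 < m*(x^2+y^2) + 2*mc*d*x + Ic + mc*d^2)
    (Ue : ℝ → ℝ → ℝ)
    (hUe : ∀ x y, Ue x y =
      k^2 / (2*(m*(x^2+y^2) + 2*mc*d*x + Ic + mc*d^2))
        + (ρ*q^2/(4*π)) * Real.log (1 - R^2/(x^2+y^2))) :
    ∀ x y : ℝ, x^2 + y^2 > R^2 →
      deriv (fun x' => Ue x' y) x = 0 →
      deriv (fun y' => Ue x y') y = 0 →
      y = 0 :=
  critical_points_on_axis_general mc Ic ρ R q d k hmc hd hk m hpos Ue hUe
end
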